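/- For every positive integer p, the function κ_p(h) = 1 − (2^{−C(p,2)}/Π_{j=0}^{p−1} j!) det_{0≤i,j<p}( (−1)^i H_{i+j}(0) − H_{i+j}(h) e^{−h²} ) is an even function of h, and κ_p(h) → 0 as h → ∞ (equivalently, when κ_p is written as a finite linear combination of functions h^{2k} e^{−m h²}, only terms with m ≥ 1 occur). -/

import Mathlib

open scoped BigOperators
open Filter

/-- The `k`-th physicists' Hermite polynomial, via
`H_k(z)/k! = Σ_m ((-1)^(k-m)/(k-m)!) (2z)^(2m-k)/(2m-k)!` (terms with negative
factorial arguments being zero). -/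
noncomputable def hermiteH (k : ℕ) (z : ℝ) : ℝ :=
  (k.factorial : ℝ) * ∑ m ∈ Finset.range (k+1),
    if k ≤ 2*m then ((-1:ℝ)^(k-m) / (k-m).factorial) * ((2*z)^(2*m-k) / (2*m-k).factorial)
    else 0

/-- `κ_p(h) = 1 − (2^{-C(p,2)}/Π_{j<p} j!) det_{0≤i,j<p}( (-1)^i H_{i+j}(0) − H_{i+j}(h)e^{-h²} )`. -/
noncomputable def kappa (p : ℕ) (h : ℝ) : ℝ :=
  1 - (((2:ℝ)^(p.choose 2))⁻¹ / ∏ j ∈ Finset.range p, (j.factorial : ℝ)) *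
    Matrix.det (Matrix.of fun i j : Fin p =>
      (-1:ℝ)^(i : ℕ) * hermiteH ((i : ℕ)+(j : ℕ)) 0
        - hermiteH ((i : ℕ)+(j : ℕ)) h * Real.exp (-h^2))

/-- `τ_p(h)`: as `κ_p`, but with the last row of the determinant replaced as in the paper,
and an extra factor `p − 1`. -/
noncomputable def tau (p : ℕ) (h : ℝ) : ℝ :=
  ((p : ℝ) - 1) * (((2:ℝ)^(p.choose 2))⁻¹ / ∏ j ∈ Finset.range p, (j.factorial : ℝ)) *
    Matrix.det (Matrix.of fun i j : Fin p =>
      if (i : ℕ) < p - 1 then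
        (-1:ℝ)^(i : ℕ) * hermiteH ((i : ℕ)+(j : ℕ)) 0
          - hermiteH ((i : ℕ)+(j : ℕ)) h * Real.exp (-h^2)
      else
        (-1:ℝ)^p * hermiteH (p+(j : ℕ)) 0 - hermiteH (p+(j : ℕ)) h * Real.exp (-h^2))

/-!
Since `H_k(-h) = (-1)ᵏ H_k(h)` and `H_n(0) = 0` for odd `n`, the matrix of `κ_p(-h)` is
`D M D` for the matrix `M` of `κ_p(h)` and `D = diag((-1)ⁱ)`, so `κ_p` is even.

As `h → ±∞`, `H_k(h) e^{-h²} → 0`, so `κ_p` tends to `1 - c det A`, where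
`c = 2^{-C(p,2)} / ∏ j!` and `A = ((-1)ⁱ H_{i+j}(0))`. Up to the factors `±2ⁱ` on rows and columns, `A` is the Gram matrix
`(π^{-1/2} ∫ zⁱ zʲ e^{-z²} dz)` of the monomials. Expanding `zⁱ` in the orthogonal basis `H_k`
factors it as `C W Cᵀ`, with `C` lower triangular with diagonal `2⁻ⁱ` and
`W = diag(2ᵏ k!)`, whence `det A = 2^{C(p,2)} ∏ j! = 1 / c`.
-/

open Finset Matrix Real
open scoped Nat Topology

/-- `monomialCoeff i k` is the coefficient of `H_k` in the Hermite expansion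
`z ^ i = ∑ₖ monomialCoeff i k * H_k(z)`. -/
noncomputable def monomialCoeff (i k : ℕ) : ℝ :=
  if k ≤ i ∧ (i - k) % 2 = 0 then i ! / (2 ^ i * k ! * ((i - k) / 2)!) else 0

lemma monomialCoeff_add_two_mul (k m : ℕ) :
    monomialCoeff (k + 2 * m) k = (k + 2 * m)! / (2 ^ (k + 2 * m) * k ! * m !) := by
  rw [monomialCoeff, if_pos (by omega), show (k + 2 * m - k) / 2 = m by omega]

lemma monomialCoeff_eq_zero {i k : ℕ} (h : ∀ m, i ≠ k + 2 * m) : monomialCoeff i k = 0 :=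
  if_neg fun ⟨hk, hm⟩ => h ((i - k) / 2) (by omega)

lemma monomialCoeff_of_lt {i k : ℕ} (h : i < k) : monomialCoeff i k = 0 :=
  monomialCoeff_eq_zero fun _ => by omega

lemma monomialCoeff_self (i : ℕ) : monomialCoeff i i = (2 ^ i)⁻¹ := by
  have hi : (i ! : ℝ) ≠ 0 := by positivity
  have := monomialCoeff_add_two_mul i 0
  simp only [mul_zero, add_zero, Nat.factorial_zero, Nat.cast_one, mul_one] at this
  rw [this, div_mul_cancel_right₀ hi]

lemma cast_factorial_succ (n : ℕ) : ((n + 1)! : ℝ) = (n + 1) * n ! := by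
  push_cast [Nat.factorial_succ]; ring

-- the recurrences come from `z * H_k = H_{k+1} / 2 + k * H_{k-1}`
lemma monomialCoeff_succ_zero (i : ℕ) : monomialCoeff (i + 1) 0 = monomialCoeff i 1 := by
  obtain ⟨m, rfl | rfl⟩ := Nat.even_or_odd' i
  · rw [monomialCoeff_eq_zero (by omega), monomialCoeff_eq_zero (by omega)]
  · rw [show 2 * m + 1 + 1 = 0 + 2 * (m + 1) by ring, show 2 * m + 1 = 1 + 2 * m by ring,
      monomialCoeff_add_two_mul, monomialCoeff_add_two_mul,
      show 0 + 2 * (m + 1) = (1 + 2 * m) + 1 by ring, cast_factorial_succ, cast_factorial_succ m]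
    push_cast
    field_simp
    ring

lemma monomialCoeff_succ_succ (i k : ℕ) : monomialCoeff (i + 1) (k + 1) =
    monomialCoeff i k / 2 + (k + 2) * monomialCoeff i (k + 2) := by
  by_cases hi : ∃ m, i = k + 2 * m
  · obtain ⟨m, rfl⟩ := hi
    rcases m with _ | m
    · rw [monomialCoeff_of_lt (by omega : k + 2 * 0 < k + 2),
        show k + 2 * 0 + 1 = k + 1 by ring, monomialCoeff_self, show k + 2 * 0 = k by ring,
        monomialCoeff_self, pow_succ]
      ring
    · rw [show k + 2 * (m + 1) + 1 = (k + 1) + 2 * (m + 1) by ring,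
        show k + 2 * (m + 1) = (k + 2) + 2 * m by ring, monomialCoeff_add_two_mul,
        monomialCoeff_add_two_mul, show k + 2 + 2 * m = k + 2 * (m + 1) by ring,
        monomialCoeff_add_two_mul, show k + 1 + 2 * (m + 1) = (k + 2 * m + 2) + 1 by ring,
        show k + 2 * (m + 1) = (k + 2 * m + 1) + 1 by ring, cast_factorial_succ (k + 2 * m + 2),
        cast_factorial_succ (k + 2 * m + 1), cast_factorial_succ k, cast_factorial_succ m,
        show k + 2 = (k + 1) + 1 by ring, cast_factorial_succ (k + 1), cast_factorial_succ k]
      push_cast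
      field_simp
      ring
  · push Not at hi
    rw [monomialCoeff_eq_zero fun m => by have := hi m; omega, monomialCoeff_eq_zero hi,
      monomialCoeff_eq_zero fun m => by have := hi (m + 1); omega]
    ring

/-- `hermiteGram i j = π^{-1/2} ∫ zⁱ zʲ e^{-z²} dz`, computed in the orthogonal basis `H_k`,
whose squared norms are `2ᵏ k! √π`. -/
noncomputable def hermiteGram (i j : ℕ) : ℝ :=
  ∑ k ∈ range (i + j + 1), 2 ^ k * k ! * monomialCoeff i k * monomialCoeff j k

lemma hermiteGram_comm (i j : ℕ) : hermiteGram i j = hermiteGram j i := by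
  rw [hermiteGram, hermiteGram, add_comm i j]
  exact sum_congr rfl fun k _ => by ring

lemma hermiteGram_eq_sum_range {i N : ℕ} (j : ℕ) (hN : i < N) : hermiteGram i j =
    ∑ k ∈ range N, 2 ^ k * k ! * monomialCoeff i k * monomialCoeff j k := by
  have truncate : ∀ M, i < M → ∑ k ∈ range M, 2 ^ k * k ! * monomialCoeff i k * monomialCoeff j k
      = ∑ k ∈ range (i + 1), 2 ^ k * k ! * monomialCoeff i k * monomialCoeff j k :=
    fun M hM => (sum_subset (range_subset_range.2 hM) fun k _ hk => by
      rw [monomialCoeff_of_lt (by simpa using hk)]; ring).symm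
  rw [hermiteGram, truncate _ (by omega), truncate N hN]

/-- The pairing of `z * zᵃ` with `zᵇ`, keeping only the raising part `H_{k+1} / 2` of each
`z * H_k`. The lowering part pairs to `hermiteGramRaise b a`. -/
noncomputable def hermiteGramRaise (a b : ℕ) : ℝ :=
  ∑ k ∈ range (a + b + 1), 2 ^ k * (k + 1)! * monomialCoeff a k * monomialCoeff b (k + 1)

lemma hermiteGram_succ_left (i j : ℕ) :
    hermiteGram (i + 1) j = hermiteGramRaise i j + hermiteGramRaise j i := by
  have lowering : hermiteGramRaise j i = monomialCoeff i 1 * monomialCoeff j 0 +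
      ∑ k ∈ range (i + j + 1), 2 ^ (k + 1) * (k + 2)! * monomialCoeff i (k + 2) *
        monomialCoeff j (k + 1) := by
    have extend := sum_range_succ
      (fun k => 2 ^ k * ((k + 1)! : ℝ) * monomialCoeff j k * monomialCoeff i (k + 1)) (i + j + 1)
    rw [monomialCoeff_of_lt (show j < i + j + 1 by omega), mul_zero, zero_mul, add_zero,
      sum_range_succ'] at extend
    rw [hermiteGramRaise, add_comm j i, ← extend, add_comm]
    simp only [pow_zero, zero_add, Nat.factorial_one, Nat.cast_one, one_mul]
    exact congrArg₂ _ (mul_comm _ _) (sum_congr rfl fun k _ => by ring)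
  rw [hermiteGram, show i + 1 + j + 1 = (i + j + 1) + 1 by ring, sum_range_succ', lowering,
    hermiteGramRaise, add_left_comm, ← sum_add_distrib, add_comm]
  congr 1
  · simp [monomialCoeff_succ_zero]
  · refine sum_congr rfl fun k _ => ?_
    rw [monomialCoeff_succ_succ, cast_factorial_succ (k + 1)]
    push_cast
    ring

lemma hermiteGram_succ_left_eq (i j : ℕ) : hermiteGram (i + 1) j = hermiteGram i (j + 1) := by
  rw [hermiteGram_succ_left, hermiteGram_comm i, hermiteGram_succ_left, add_comm]

lemma hermiteGram_eq_monomialCoeff_zero (i j : ℕ) :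
    hermiteGram i j = monomialCoeff (i + j) 0 := by
  induction i generalizing j with
  | zero =>
    rw [hermiteGram, sum_eq_single 0 (fun k _ hk => by rw [monomialCoeff_of_lt (by omega)]; ring)
      (by simp)]
    simp [monomialCoeff_self]
  | succ i ih => rw [hermiteGram_succ_left_eq, ih, add_right_comm, add_assoc]

lemma hermiteH_neg (k : ℕ) (z : ℝ) : hermiteH k (-z) = (-1) ^ k * hermiteH k z := by
  rw [hermiteH, hermiteH, mul_sum, mul_sum, mul_sum]
  refine sum_congr rfl fun m _ => ?_
  split_ifs with hm
  · rw [show 2 * -z = -(2 * z) by ring, neg_pow (2 * z),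
      neg_one_pow_eq_pow_mod_two (2 * m - k), show (2 * m - k) % 2 = k % 2 by omega,
      ← neg_one_pow_eq_pow_mod_two]
    ring
  · ring

lemma hermiteH_zero_eq (n : ℕ) : hermiteH n 0 = (-1) ^ (n / 2) * 2 ^ n * monomialCoeff n 0 := by
  rw [hermiteH, sum_eq_single (n / 2)]
  · obtain ⟨m, rfl | rfl⟩ := Nat.even_or_odd' n
    · rw [if_pos (by omega), show 2 * m = 0 + 2 * m by ring, monomialCoeff_add_two_mul]
      simp only [zero_add, Nat.mul_div_cancel_left m two_pos, show 2 * m - m = m by omega,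
        Nat.sub_self, pow_zero, Nat.factorial_zero, Nat.cast_one]
      field_simp
    · rw [if_neg (by omega), monomialCoeff_eq_zero fun _ => by omega]
      ring
  · intro m _ hm
    rw [mul_zero, ite_eq_right_iff]
    intro hnm
    rw [zero_pow (by omega)]
    ring
  · exact fun h => absurd (mem_range.2 (by omega)) h

lemma neg_one_pow_mul_hermiteH_zero (i j : ℕ) : (-1) ^ i * hermiteH (i + j) 0 =
    ((-1) ^ (i / 2) * 2 ^ i) * ((-1) ^ (j / 2) * 2 ^ j) * hermiteGram i j := by
  rw [hermiteH_zero_eq, hermiteGram_eq_monomialCoeff_zero]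
  by_cases hodd : (i + j) % 2 = 1
  · rw [monomialCoeff_eq_zero fun _ => by omega]
    ring
  · have hsign : (-1 : ℝ) ^ i * (-1) ^ ((i + j) / 2) = (-1) ^ (i / 2) * (-1) ^ (j / 2) := by
      rw [← pow_add, ← pow_add, neg_one_pow_eq_pow_mod_two, neg_one_pow_eq_pow_mod_two (_ + _)]
      congr 1
      obtain ⟨a, rfl | rfl⟩ := Nat.even_or_odd' i <;>
        obtain ⟨b, rfl | rfl⟩ := Nat.even_or_odd' j <;> omega
    rw [pow_add]
    linear_combination (2 ^ i * 2 ^ j * monomialCoeff (i + j) 0) * hsign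

lemma Matrix.det_mul_row_mul_column {n R : Type*} [Fintype n] [DecidableEq n] [CommRing R]
    (v : n → R) (A : Matrix n n R) :
    det (of fun i j => v i * v j * A i j) = (∏ i, v i) ^ 2 * det A := by
  rw [sq, mul_assoc, ← det_mul_column, ← det_mul_row]
  congr 1
  ext i j
  simp only [of_apply]
  ring

lemma det_hermiteGram (p : ℕ) :
    det (of fun i j : Fin p => hermiteGram i j) = ∏ k : Fin p, ((k : ℕ)! / 2 ^ (k : ℕ) : ℝ) := by
  set C : Matrix (Fin p) (Fin p) ℝ := of fun i k => monomialCoeff i k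
  have factor : (of fun i j : Fin p => hermiteGram i j) =
      C * diagonal (fun k : Fin p => (2 ^ (k : ℕ) * (k : ℕ)! : ℝ)) * Cᵀ := by
    ext i j
    rw [of_apply, hermiteGram_eq_sum_range j i.isLt, ← Fin.sum_univ_eq_sum_range, mul_apply]
    simp only [C, mul_diagonal, transpose_apply, of_apply]
    exact sum_congr rfl fun k _ => by ring
  have hC : C.det = ∏ i : Fin p, (2 ^ (i : ℕ) : ℝ)⁻¹ := by
    rw [det_of_isLowerTriangular C fun i k hik => monomialCoeff_of_lt hik]
    simp [C, monomialCoeff_self]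
  rw [factor, det_mul, det_mul, det_transpose, det_diagonal, hC, mul_comm, ← mul_assoc,
    ← prod_mul_distrib, ← prod_mul_distrib]
  refine prod_congr rfl fun k _ => ?_
  field_simp

lemma prod_two_pow_mul_factorial (p : ℕ) :
    ∏ k : Fin p, (2 ^ (k : ℕ) * (k : ℕ)! : ℝ) = 2 ^ p.choose 2 * ∏ k ∈ range p, (k ! : ℝ) := by
  rw [prod_mul_distrib, prod_pow_eq_pow_sum, Fin.sum_univ_eq_sum_range (fun k => k),
    sum_range_id, Nat.choose_two_right, Fin.prod_univ_eq_prod_range (fun k => (k ! : ℝ))]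

lemma det_hankel_hermiteH_zero (p : ℕ) :
    det (of fun i j : Fin p => (-1) ^ (i : ℕ) * hermiteH (i + j) 0) =
      2 ^ p.choose 2 * ∏ k ∈ range p, (k ! : ℝ) := by
  set v : Fin p → ℝ := fun i => (-1) ^ ((i : ℕ) / 2) * 2 ^ (i : ℕ)
  have hankel : (of fun i j : Fin p => (-1) ^ (i : ℕ) * hermiteH (i + j) 0) =
      of fun i j => v i * v j * (of fun i j : Fin p => hermiteGram i j) i j := by
    ext i j
    simp [v, neg_one_pow_mul_hermiteH_zero]
  rw [hankel, det_mul_row_mul_column, det_hermiteGram, ← prod_pow, ← prod_mul_distrib,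
    ← prod_two_pow_mul_factorial]
  refine prod_congr rfl fun k _ => ?_
  have hsign : ((-1 : ℝ) ^ ((k : ℕ) / 2)) ^ 2 = 1 := by
    rw [← pow_mul, pow_mul', neg_one_sq, one_pow]
  simp only [v, mul_pow, hsign, one_mul]
  field_simp

lemma tendsto_pow_mul_exp_neg_sq_cocompact (n : ℕ) :
    Tendsto (fun z : ℝ => z ^ n * exp (-z ^ 2)) (cocompact ℝ) (𝓝 0) := by
  refine tendsto_zero_iff_norm_tendsto_zero.2
    ((tendsto_rpow_abs_mul_exp_neg_mul_sq_cocompact one_pos n).congr fun z => ?_)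
  simp [abs_of_pos (exp_pos _)]

lemma exists_hermiteH_eq_sum (k : ℕ) :
    ∃ a : ℕ → ℝ, ∀ z, hermiteH k z = ∑ m ∈ range (k + 1), a m * z ^ (2 * m - k) :=
  ⟨fun m => k ! * if k ≤ 2 * m then
      (-1 : ℝ) ^ (k - m) / (k - m)! * (2 ^ (2 * m - k) / (2 * m - k)!) else 0, fun z => by
      rw [hermiteH, mul_sum]
      exact sum_congr rfl fun m _ => by dsimp only; split_ifs <;> ring⟩

lemma tendsto_hermiteH_mul_exp_neg_sq_cocompact (k : ℕ) :
    Tendsto (fun z => hermiteH k z * exp (-z ^ 2)) (cocompact ℝ) (𝓝 0) := by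
  obtain ⟨a, ha⟩ := exists_hermiteH_eq_sum k
  simp_rw [ha, sum_mul, mul_assoc]
  have := tendsto_finsetSum (range (k + 1)) fun m _ =>
    (tendsto_pow_mul_exp_neg_sq_cocompact (2 * m - k)).const_mul (a m)
  rwa [sum_eq_zero fun m _ => mul_zero (a m)] at this

lemma kappa_neg (p : ℕ) (h : ℝ) : kappa p (-h) = kappa p h := by
  have conj : (of fun i j : Fin p =>
      (-1 : ℝ) ^ (i : ℕ) * hermiteH (i + j) 0 - hermiteH (i + j) (-h) * exp (-(-h) ^ 2)) =
      of fun i j : Fin p => (-1) ^ (i : ℕ) * (-1) ^ (j : ℕ) * (of fun i j : Fin p =>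
        (-1 : ℝ) ^ (i : ℕ) * hermiteH (i + j) 0 - hermiteH (i + j) h * exp (-h ^ 2)) i j := by
    ext i j
    -- `H_n(0) = 0` for odd `n`, so `(-1)ⁱ H_{i+j}(0) = (-1)ʲ H_{i+j}(0)`
    have h0 := hermiteH_neg (i + j) 0
    rw [neg_zero, pow_add] at h0
    simp only [of_apply, hermiteH_neg, neg_sq, pow_add]
    linear_combination (-1 : ℝ) ^ (i : ℕ) * h0
  rw [kappa, kappa, conj, det_mul_row_mul_column, ← prod_pow]
  simp [← pow_mul]

lemma tendsto_kappa_cocompact (p : ℕ) : Tendsto (kappa p) (cocompact ℝ) (𝓝 0) := by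
  set M : ℝ → Matrix (Fin p) (Fin p) ℝ := fun h => of fun i j =>
    (-1) ^ (i : ℕ) * hermiteH (i + j) 0 - hermiteH (i + j) h * exp (-h ^ 2)
  have entries : Tendsto M (cocompact ℝ)
      (𝓝 (of fun i j : Fin p => (-1) ^ (i : ℕ) * hermiteH (i + j) 0)) :=
    tendsto_pi_nhds.2 fun i => tendsto_pi_nhds.2 fun j => by
      have := (tendsto_const_nhds (x := (-1 : ℝ) ^ (i : ℕ) * hermiteH (i + j) 0)).sub
        (tendsto_hermiteH_mul_exp_neg_sq_cocompact (i + j))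
      rwa [sub_zero] at this
  have dets : Tendsto (fun h => (M h).det) (cocompact ℝ)
      (𝓝 (2 ^ p.choose 2 * ∏ k ∈ range p, (k ! : ℝ))) := by
    rw [← det_hankel_hermiteH_zero]
    exact (continuous_id.matrix_det.tendsto _).comp entries
  have limit :=
    (dets.const_mul (((2 : ℝ) ^ p.choose 2)⁻¹ / ∏ j ∈ range p, (j ! : ℝ))).const_sub 1
  rwa [div_mul_eq_mul_div, inv_mul_cancel_left₀ (by positivity), div_self (by positivity),
    sub_self] at limit

theorem stmt13_general (p : ℕ) :
    (∀ h : ℝ, kappa p (-h) = kappa p h) ∧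
      Filter.Tendsto (kappa p) atTop (nhds 0) :=
  ⟨kappa_neg p, (tendsto_kappa_cocompact p).mono_left atTop_le_cocompact⟩

/-- `κ_p` is an even function of `h`, and `κ_p(h) → 0` as `h → ∞`. -/
theorem stmt13 (p : ℕ) (hp : 0 < p) :
    (∀ h : ℝ, kappa p (-h) = kappa p h) ∧
      Filter.Tendsto (kappa p) atTop (nhds 0) :=
  stmt13_general p
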